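/- arXiv:2504.14725 — 2 statements merged into one kernel-verified Lean document; each statement's English description precedes it below -/
import Mathlib

section
/- Let A, Â ∈ ℝ^{m×n} with ‖Â − A‖_∞ ≤ δ. Let (x†, y†) be a Nash equilibrium of A, and let (x̂, ŷ) be a Nash equilibrium of Â. Then the instantaneous regret at y = y† satisfies x̂ᵀAy† − x†ᵀAy† ≤ 5δ. -/
def pay {m n : ℕ} (M : Matrix (Fin m) (Fin n) ℝ) (x : Fin m → ℝ) (y : Fin n → ℝ) : ℝ :=
  ∑ i, ∑ j, x i * M i j * y j

/-- (x*, y*) is a Nash equilibrium of the zero-sum game with matrix M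
(x minimizing, y maximizing). -/
def IsNE {m n : ℕ} (M : Matrix (Fin m) (Fin n) ℝ)
    (xs : Fin m → ℝ) (ys : Fin n → ℝ) : Prop :=
  xs ∈ stdSimplex ℝ (Fin m) ∧ ys ∈ stdSimplex ℝ (Fin n) ∧
  (∀ x ∈ stdSimplex ℝ (Fin m), pay M xs ys ≤ pay M x ys) ∧
  (∀ y ∈ stdSimplex ℝ (Fin n), pay M xs y ≤ pay M xs ys)

theorem stmt_11 (m n : ℕ) (A Ahat : Matrix (Fin m) (Fin n) ℝ) (δ : ℝ)
    (h : ∀ i j, |Ahat i j - A i j| ≤ δ)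
    (xd : Fin m → ℝ) (yd : Fin n → ℝ) (hNE : IsNE A xd yd)
    (xh : Fin m → ℝ) (yh : Fin n → ℝ) (hNEh : IsNE Ahat xh yh) :
    pay A xh yd - pay A xd yd ≤ 5 * δ := by
  obtain ⟨hxd, hyd, hxdmin, hydmax⟩ := hNE
  obtain ⟨hxh, hyh, hxhmin, hyhmax⟩ := hNEh
  have key : ∀ (x : Fin m → ℝ) (y : Fin n → ℝ), x ∈ stdSimplex ℝ (Fin m) →
      y ∈ stdSimplex ℝ (Fin n) → (M M' : Matrix (Fin m) (Fin n) ℝ) →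
      (∀ i j, |M i j - M' i j| ≤ δ) → pay M x y ≤ pay M' x y + δ := by
    intro x y hx hy M M' hM
    have : pay M x y - pay M' x y ≤ δ := by
      have : pay M x y - pay M' x y = ∑ i, ∑ j, x i * (M i j - M' i j) * y j := by
        simp only [pay, ← Finset.sum_sub_distrib]
        refine Finset.sum_congr rfl fun i _ => Finset.sum_congr rfl fun j _ => by ring
      rw [this]
      calc ∑ i, ∑ j, x i * (M i j - M' i j) * y j
          ≤ ∑ i, ∑ j, x i * δ * y j := by
            apply Finset.sum_le_sum; intro i _
            apply Finset.sum_le_sum; intro j _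
            have h1 := hx.1 i
            have h2 := hy.1 j
            have h3 := abs_le.1 (hM i j)
            nlinarith [mul_nonneg (mul_nonneg h1 h2) (sub_nonneg.2 h3.2)]
        _ = δ * ((∑ i, x i) * (∑ j, y j)) := by
            rw [Finset.sum_mul_sum, Finset.mul_sum]
            exact Finset.sum_congr rfl fun i _ => by rw [Finset.mul_sum]; exact Finset.sum_congr rfl fun j _ => by ring
        _ = δ := by rw [hx.2, hy.2]; ring
    linarith
  have hδ0 : 0 ≤ δ := by
    obtain ⟨i⟩ : Nonempty (Fin m) := by
      by_contra hne
      have : (∑ i, xd i) = 0 := by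
        apply Finset.sum_eq_zero; intro i _; exact absurd ⟨i⟩ hne
      rw [hxd.2] at this; norm_num at this
    obtain ⟨j⟩ : Nonempty (Fin n) := by
      by_contra hne
      have : (∑ j, yd j) = 0 := by
        apply Finset.sum_eq_zero; intro j _; exact absurd ⟨j⟩ hne
      rw [hyd.2] at this; norm_num at this
    exact le_trans (abs_nonneg _) (h i j)
  have h1 : pay A xh yd ≤ pay Ahat xh yd + δ := key _ _ hxh hyd A Ahat (fun i j => by rw [abs_sub_comm]; exact h i j)
  have h2 : pay Ahat xh yd ≤ pay Ahat xh yh := hyhmax yd hyd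
  have h3 : pay Ahat xh yh ≤ pay Ahat xd yh := hxhmin xd hxd
  have h4 : pay Ahat xd yh ≤ pay A xd yh + δ :=
    key _ _ hxd hyh Ahat A h
  have h5 : pay A xd yh ≤ pay A xd yd := hydmax yh hyh
  linarith
end

section
/- Let A, Â ∈ ℝ^{m×n} with ‖Â − A‖_∞ ≤ δ. Let (x̂, ŷ) be a Nash equilibrium of Â and (x†, y†) a Nash equilibrium of A. Then for every y ∈ Y (n-simplex), x̂ᵀAy − x†ᵀAy† ≤ 2δ. -/
lemma pay_le_pay_add {m n : ℕ} (M M' : Matrix (Fin m) (Fin n) ℝ) (δ : ℝ)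
    (h : ∀ i j, M i j - M' i j ≤ δ)
    (x : Fin m → ℝ) (y : Fin n → ℝ)
    (hx : x ∈ stdSimplex ℝ (Fin m)) (hy : y ∈ stdSimplex ℝ (Fin n)) :
    pay M x y ≤ pay M' x y + δ := by
  have key : pay M x y - pay M' x y ≤ δ := by
    have : pay M x y - pay M' x y = ∑ i, ∑ j, x i * (M i j - M' i j) * y j := by
      unfold pay
      rw [← Finset.sum_sub_distrib]
      congr 1; ext i
      rw [← Finset.sum_sub_distrib]
      congr 1; ext j; ring
    rw [this]
    calc ∑ i, ∑ j, x i * (M i j - M' i j) * y j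
        ≤ ∑ i, ∑ j, x i * δ * y j := by
          apply Finset.sum_le_sum; intro i _
          apply Finset.sum_le_sum; intro j _
          have hxi := hx.1 i
          have hyj := hy.1 j
          have h1 := mul_le_mul_of_nonneg_left (h i j) hxi
          exact mul_le_mul_of_nonneg_right h1 hyj
      _ = ∑ i, x i * δ * ∑ j, y j := by simp_rw [← Finset.mul_sum]
      _ = δ := by rw [hy.2]; simp_rw [mul_one]; rw [← Finset.sum_mul, hx.2, one_mul]
  linarith

theorem stmt_12 (m n : ℕ) (A Ahat : Matrix (Fin m) (Fin n) ℝ) (δ : ℝ)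
    (h : ∀ i j, |Ahat i j - A i j| ≤ δ)
    (xd : Fin m → ℝ) (yd : Fin n → ℝ) (hNE : IsNE A xd yd)
    (xh : Fin m → ℝ) (yh : Fin n → ℝ) (hNEh : IsNE Ahat xh yh) :
    ∀ y ∈ stdSimplex ℝ (Fin n), pay A xh y - pay A xd yd ≤ 2 * δ := by
  intro y hy
  obtain ⟨hxd, hyd, hxdmin, hydmax⟩ := hNE
  obtain ⟨hxh, hyh, hxhmin, hyhmax⟩ := hNEh
  have h1 : pay A xh y ≤ pay Ahat xh y + δ :=
    pay_le_pay_add A Ahat δ (fun i j => by have := abs_le.mp (h i j); linarith) xh y hxh hy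
  have h2 : pay Ahat xh y ≤ pay Ahat xh yh := hyhmax y hy
  have h3 : pay Ahat xh yh ≤ pay Ahat xd yh := hxhmin xd hxd
  have h4 : pay Ahat xd yh ≤ pay A xd yh + δ :=
    pay_le_pay_add Ahat A δ (fun i j => (abs_le.mp (h i j)).2) xd yh hxd hyh
  have h5 : pay A xd yh ≤ pay A xd yd := hydmax yh hyh
  linarith
end
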